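/- arXiv:2406.08615 — 2 statements merged into one kernel-verified Lean document; each statement's English description precedes it below -/
import Mathlib

section
/- Let z₀ ∈ ℂ, R > 0, and real numbers θ₁ < θ₂ < θ₃ < θ₄ < θ₁ + 2π. Set w₁ = z₀ + R·exp(iθ₁), b₁ = z₀ + R·exp(iθ₂), w₂ = z₀ + R·exp(iθ₃), b₂ = z₀ + R·exp(iθ₄), so that w₁, b₁, w₂, b₂ are four distinct points lying in cyclic order on a common circle. For positive real numbers ν₁, ν₂, ν₃, ν₄ define the complex numbers ∂(w₁,b₁) := ν₁·(b₁ − w₁)/|b₁ − w₁|, ∂(b₁,w₂) := ν₂·(b₁ − w₂)/|b₁ − w₂|, ∂(w₂,b₂) := ν₃·(b₂ − w₂)/|b₂ − w₂|, ∂(b₂,w₁) := ν₄·(b₂ − w₁)/|b₂ − w₁| (each has modulus νᵢ and points from the w-point toward the b-point). Then (−1)·(∂(w₁,b₁)/∂(b₁,w₂))·(∂(w₂,b₂)/∂(b₂,w₁)) is a positive real number. -/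
open Complex

lemma chord (α β : ℝ) :
    Complex.exp ((β:ℂ) * I) - Complex.exp ((α:ℂ) * I)
      = (2 * Real.sin ((β - α)/2) : ℝ) * (I * Complex.exp ((((α+β)/2 : ℝ):ℂ) * I)) := by
  rw [Complex.exp_mul_I, Complex.exp_mul_I, Complex.exp_mul_I]
  rw [← Complex.ofReal_cos, ← Complex.ofReal_sin, ← Complex.ofReal_cos, ← Complex.ofReal_sin,
    ← Complex.ofReal_cos, ← Complex.ofReal_sin]
  have hc : Real.cos β - Real.cos α
      = -2 * Real.sin ((β + α)/2) * Real.sin ((β - α)/2) := Real.cos_sub_cos β α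
  have hs : Real.sin β - Real.sin α
      = 2 * Real.sin ((β - α)/2) * Real.cos ((β + α)/2) := Real.sin_sub_sin β α
  have hm : ((β + α)/2 : ℝ) = (α + β)/2 := by ring
  rw [hm] at hc hs
  have hc' : ((Real.cos β : ℂ)) - Real.cos α
      = -2 * Real.sin ((α + β)/2) * Real.sin ((β - α)/2) := by exact_mod_cast congrArg Complex.ofReal hc
  have hs' : ((Real.sin β : ℂ)) - Real.sin α
      = 2 * Real.sin ((β - α)/2) * Real.cos ((α + β)/2) := by exact_mod_cast congrArg Complex.ofReal hs
  rw [Complex.ofReal_mul, Complex.ofReal_ofNat]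
  linear_combination hc' + I * hs' + (-(2:ℂ) * Real.sin ((β - α)/2) * Real.sin ((α + β)/2)) * Complex.I_sq

lemma dir (z₀ : ℂ) (R : ℝ) (hR : 0 < R) (α β : ℝ) (hαβ : α < β) (h2 : β < α + 2 * Real.pi) :
    ((z₀ + (R:ℂ) * Complex.exp ((β:ℂ) * I)) - (z₀ + (R:ℂ) * Complex.exp ((α:ℂ) * I)))
      / ((‖(z₀ + (R:ℂ) * Complex.exp ((β:ℂ) * I)) - (z₀ + (R:ℂ) * Complex.exp ((α:ℂ) * I))‖ : ℝ) : ℂ)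
    = I * Complex.exp ((((α+β)/2 : ℝ):ℂ) * I) := by
  have hs : 0 < Real.sin ((β - α)/2) := by
    apply Real.sin_pos_of_pos_of_lt_pi <;> [linarith; linarith [Real.pi_pos]]
  have hdiff : (z₀ + (R:ℂ) * Complex.exp ((β:ℂ) * I)) - (z₀ + (R:ℂ) * Complex.exp ((α:ℂ) * I))
      = ((R * (2 * Real.sin ((β - α)/2)) : ℝ) : ℂ) * (I * Complex.exp ((((α+β)/2 : ℝ):ℂ) * I)) := by
    have := chord α β
    push_cast
    push_cast at this
    linear_combination ((R:ℂ)) * this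
  rw [hdiff]
  have hpos : 0 < R * (2 * Real.sin ((β - α)/2)) := by positivity
  have habs : ‖(((R * (2 * Real.sin ((β - α)/2)) : ℝ) : ℂ)
      * (I * Complex.exp ((((α+β)/2 : ℝ):ℂ) * I)))‖ = R * (2 * Real.sin ((β - α)/2)) := by
    rw [norm_mul, norm_mul, Complex.norm_real, Real.norm_eq_abs, Complex.norm_I, Complex.norm_exp_ofReal_mul_I,
      abs_of_pos hpos]
    ring
  rw [habs, mul_comm, mul_div_assoc]
  rw [div_self (by exact_mod_cast hpos.ne' : ((R * (2 * Real.sin ((β - α)/2)) : ℝ) : ℂ) ≠ 0), mul_one]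

/-- For a cyclic quadrilateral `w₁ b₁ w₂ b₂` inscribed in a circle of center `z₀` and
radius `R` (points in strict cyclic order given by angles `θ₁ < θ₂ < θ₃ < θ₄ < θ₁ + 2π`),
and Dirac-operator entries `dᵢ` of modulus `νᵢ > 0` pointing from the white point to the
black point, the alternating product `(-1) * (d₁/d₂) * (d₃/d₄)` is a positive real number. -/
theorem stmt0 (z₀ : ℂ) (R : ℝ) (hR : 0 < R) (θ₁ θ₂ θ₃ θ₄ : ℝ)
    (h12 : θ₁ < θ₂) (h23 : θ₂ < θ₃) (h34 : θ₃ < θ₄)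
    (h41 : θ₄ < θ₁ + 2 * Real.pi)
    (ν₁ ν₂ ν₃ ν₄ : ℝ) (hν₁ : 0 < ν₁) (hν₂ : 0 < ν₂) (hν₃ : 0 < ν₃) (hν₄ : 0 < ν₄)
    (w₁ b₁ w₂ b₂ : ℂ)
    (hw₁ : w₁ = z₀ + (R : ℂ) * Complex.exp ((θ₁ : ℂ) * Complex.I))
    (hb₁ : b₁ = z₀ + (R : ℂ) * Complex.exp ((θ₂ : ℂ) * Complex.I))
    (hw₂ : w₂ = z₀ + (R : ℂ) * Complex.exp ((θ₃ : ℂ) * Complex.I))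
    (hb₂ : b₂ = z₀ + (R : ℂ) * Complex.exp ((θ₄ : ℂ) * Complex.I))
    (d₁ d₂ d₃ d₄ : ℂ)
    (hd₁ : d₁ = (ν₁ : ℂ) * ((b₁ - w₁) / ((‖b₁ - w₁‖ : ℝ) : ℂ)))
    (hd₂ : d₂ = (ν₂ : ℂ) * ((b₁ - w₂) / ((‖b₁ - w₂‖ : ℝ) : ℂ)))
    (hd₃ : d₃ = (ν₃ : ℂ) * ((b₂ - w₂) / ((‖b₂ - w₂‖ : ℝ) : ℂ)))
    (hd₄ : d₄ = (ν₄ : ℂ) * ((b₂ - w₁) / ((‖b₂ - w₁‖ : ℝ) : ℂ))) :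
    ∃ r : ℝ, 0 < r ∧ (-1 : ℂ) * (d₁ / d₂) * (d₃ / d₄) = (r : ℂ) := by
  have e1 : d₁ = (ν₁ : ℂ) * (I * Complex.exp ((((θ₁+θ₂)/2 : ℝ):ℂ) * I)) := by
    rw [hd₁, hb₁, hw₁, dir z₀ R hR θ₁ θ₂ h12 (by linarith)]
  have e3 : d₃ = (ν₃ : ℂ) * (I * Complex.exp ((((θ₃+θ₄)/2 : ℝ):ℂ) * I)) := by
    rw [hd₃, hb₂, hw₂, dir z₀ R hR θ₃ θ₄ h34 (by linarith)]
  have e4 : d₄ = (ν₄ : ℂ) * (I * Complex.exp ((((θ₁+θ₄)/2 : ℝ):ℂ) * I)) := by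
    rw [hd₄, hb₂, hw₁, dir z₀ R hR θ₁ θ₄ (by linarith) h41]
  have e2 : d₂ = (ν₂ : ℂ) * (-(I * Complex.exp ((((θ₂+θ₃)/2 : ℝ):ℂ) * I))) := by
    have h := dir z₀ R hR θ₂ θ₃ h23 (by linarith)
    rw [hd₂, hb₁, hw₂]
    have hflip : b₁ - w₂ = -((z₀ + (R:ℂ) * Complex.exp ((θ₃:ℂ) * I)) - (z₀ + (R:ℂ) * Complex.exp ((θ₂:ℂ) * I))) := by
      rw [hb₁, hw₂]; ring
    rw [hb₁, hw₂] at hflip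
    rw [hflip, norm_neg, neg_div, h]
  refine ⟨ν₁ * ν₃ / (ν₂ * ν₄), by positivity, ?_⟩
  rw [e1, e2, e3, e4]
  have hE : Complex.exp ((((θ₁+θ₂)/2 : ℝ):ℂ) * I) * Complex.exp ((((θ₃+θ₄)/2 : ℝ):ℂ) * I)
      = Complex.exp ((((θ₂+θ₃)/2 : ℝ):ℂ) * I) * Complex.exp ((((θ₁+θ₄)/2 : ℝ):ℂ) * I) := by
    rw [← Complex.exp_add, ← Complex.exp_add]
    congr 1
    push_cast
    ring
  have h1 : ((ν₁:ℂ)) ≠ 0 := by exact_mod_cast hν₁.ne'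
  have h2 : ((ν₂:ℂ)) ≠ 0 := by exact_mod_cast hν₂.ne'
  have h3 : ((ν₃:ℂ)) ≠ 0 := by exact_mod_cast hν₃.ne'
  have h4 : ((ν₄:ℂ)) ≠ 0 := by exact_mod_cast hν₄.ne'
  have hex := Complex.exp_ne_zero ((((θ₂+θ₃)/2 : ℝ):ℂ) * I)
  have hex' := Complex.exp_ne_zero ((((θ₁+θ₄)/2 : ℝ):ℂ) * I)
  set E₁ := Complex.exp ((((θ₁+θ₂)/2 : ℝ):ℂ) * I) with hA
  set E₂ := Complex.exp ((((θ₂+θ₃)/2 : ℝ):ℂ) * I) with hB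
  set E₃ := Complex.exp ((((θ₃+θ₄)/2 : ℝ):ℂ) * I) with hC
  set E₄ := Complex.exp ((((θ₁+θ₄)/2 : ℝ):ℂ) * I) with hD
  push_cast
  field_simp
  linear_combination hE
end

section
/- Let n ≥ 1 and let A be an n × n complex matrix such that there exists u ∈ ℂ with |u| = 1 with: for every permutation σ of {1,…,n}, sgn(σ)·∏_{i=1}^{n} A_{i,σ(i)} = t_σ·u for some real t_σ ≥ 0; and assume at least one permutation σ₀ satisfies ∏_i A_{i,σ₀(i)} ≠ 0 (hence det A ≠ 0 and A is invertible). Define a probability measure μ on the permutations of {1,…,n} by μ(σ) := (∏_{i=1}^n |A_{i,σ(i)}|) / (∑_τ ∏_{i=1}^n |A_{i,τ(i)}|). Let 1 ≤ t ≤ n, let w₁,…,w_t be distinct row indices and b₁,…,b_t distinct column indices. Then μ({σ : σ(wᵢ) = bᵢ for all 1 ≤ i ≤ t}) = (∏_{i=1}^{t} |A_{wᵢ,bᵢ}|) · |det( ((A⁻¹)_{bᵢ,w_j})_{1 ≤ i,j ≤ t} )|. -/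
open Matrix Finset

private lemma det_row_form {n : ℕ} (M : Matrix (Fin n) (Fin n) ℂ) :
    M.det = ∑ σ : Equiv.Perm (Fin n), ((Equiv.Perm.sign σ : ℤ) : ℂ) * ∏ i, M i (σ i) := by
  rw [← Matrix.det_transpose, Matrix.det_apply']
  simp [Matrix.transpose_apply]

private lemma key_identity {n t : ℕ} (A : Matrix (Fin n) (Fin n) ℂ) (hA : IsUnit A.det)
    (W B : Fin t → Fin n) (hW : Function.Injective W) :
    ∑ σ ∈ Finset.univ.filter (fun σ : Equiv.Perm (Fin n) => ∀ i, σ (W i) = B i),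
        ((Equiv.Perm.sign σ : ℤ) : ℂ) * ∏ i, A i (σ i)
      = A.det * (∏ i, A (W i) (B i)) *
        Matrix.det (Matrix.of fun i j : Fin t => A⁻¹ (B i) (W j)) := by
  classical
  set U : Matrix (Fin n) (Fin t) ℂ := Matrix.of fun i k => if i = W k then 1 else 0 with hU
  set V : Matrix (Fin t) (Fin n) ℂ :=
    Matrix.of fun k j => (if j = B k then A (W k) (B k) else 0) - A (W k) j with hV
  have hA1 : A * A⁻¹ = 1 := Matrix.mul_nonsing_inv A hA
  have hUV : ∀ k j, (A + U * V) (W k) j = if j = B k then A (W k) (B k) else 0 := by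
    intro k j
    simp only [Matrix.add_apply, Matrix.mul_apply, hU, hV, Matrix.of_apply]
    rw [Finset.sum_eq_single k]
    · simp
    · intro l _ hl
      rw [if_neg (fun e => hl (hW e).symm), zero_mul]
    · intro habs; exact absurd (Finset.mem_univ k) habs
  have hUV' : ∀ i, (∀ k, i ≠ W k) → ∀ j, (A + U * V) i j = A i j := by
    intro i hi j
    simp only [Matrix.add_apply, Matrix.mul_apply, hU, hV, Matrix.of_apply]
    rw [Finset.sum_eq_zero, add_zero]
    intro l _
    rw [if_neg (hi l), zero_mul]
  have hprod : ∀ σ : Equiv.Perm (Fin n),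
      (∏ i, (A + U * V) i (σ i)) =
        if (∀ k, σ (W k) = B k) then ∏ i, A i (σ i) else 0 := by
    intro σ
    by_cases hσ : ∀ k, σ (W k) = B k
    · rw [if_pos hσ]
      refine Finset.prod_congr rfl fun i _ => ?_
      by_cases hi : ∃ k, i = W k
      · obtain ⟨k, rfl⟩ := hi
        rw [hUV k (σ (W k)), if_pos (hσ k), hσ k]
      · push_neg at hi
        exact hUV' i hi (σ i)
    · rw [if_neg hσ]
      push_neg at hσ
      obtain ⟨k, hk⟩ := hσ
      refine Finset.prod_eq_zero (Finset.mem_univ (W k)) ?_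
      rw [hUV k, if_neg hk]
  have hdet1 : ∑ σ ∈ Finset.univ.filter (fun σ : Equiv.Perm (Fin n) => ∀ i, σ (W i) = B i),
      ((Equiv.Perm.sign σ : ℤ) : ℂ) * ∏ i, A i (σ i) = (A + U * V).det := by
    rw [det_row_form, Finset.sum_filter]
    refine Finset.sum_congr rfl fun σ _ => ?_
    rw [hprod σ]
    split_ifs <;> simp
  have hfac : A + U * V = A * (1 + A⁻¹ * U * V) := by
    rw [Matrix.mul_add, Matrix.mul_one, ← Matrix.mul_assoc, ← Matrix.mul_assoc, hA1,
      Matrix.one_mul]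
  have hsmall : (1 : Matrix (Fin t) (Fin t) ℂ) + V * (A⁻¹ * U)
      = Matrix.diagonal (fun k => A (W k) (B k)) *
        Matrix.of (fun i j : Fin t => A⁻¹ (B i) (W j)) := by
    ext k l
    have hinner : ∀ j, (A⁻¹ * U) j l = A⁻¹ j (W l) := by
      intro j
      simp only [Matrix.mul_apply, hU, Matrix.of_apply, mul_ite, mul_one, mul_zero]
      rw [Finset.sum_ite_eq' Finset.univ (W l) (fun m => A⁻¹ j m), if_pos (Finset.mem_univ _)]
    have hrow : ∑ j, A (W k) j * A⁻¹ j (W l) = if k = l then 1 else 0 := by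
      have : ∑ j, A (W k) j * A⁻¹ j (W l) = (A * A⁻¹) (W k) (W l) := by
        rw [Matrix.mul_apply]
      rw [this, hA1, Matrix.one_apply]
      by_cases hkl : k = l
      · subst hkl; simp
      · rw [if_neg (fun e => hkl (hW e)), if_neg hkl]
    rw [Matrix.diagonal_mul]
    simp only [Matrix.add_apply, Matrix.mul_apply, Matrix.one_apply, hV, Matrix.of_apply,
      hinner, sub_mul, ite_mul, zero_mul, Finset.sum_sub_distrib]
    rw [Finset.sum_ite_eq' Finset.univ (B k) (fun j => A (W k) (B k) * A⁻¹ j (W l)),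
      if_pos (Finset.mem_univ _), hrow]
    ring
  rw [hdet1, hfac, Matrix.det_mul, Matrix.det_one_add_mul_comm (A⁻¹ * U) V, hsmall,
    Matrix.det_mul, Matrix.det_diagonal]
  ring

/-- Local statistics for the dimer model on finite graphs: with `A` an `n × n` complex
matrix all of whose nonzero signed determinant terms share a common argument, and with a
nonvanishing term, the Boltzmann measure `μ(σ) ∝ ∏ᵢ |A_{i,σ(i)}|` on permutations gives
`μ(σ(wᵢ) = bᵢ, 1 ≤ i ≤ t) = (∏ᵢ |A_{wᵢ,bᵢ}|) · |det ((A⁻¹)_{bᵢ,wⱼ})|`. -/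
theorem stmt2 (n : ℕ) (hn : 1 ≤ n) (A : Matrix (Fin n) (Fin n) ℂ)
    (u : ℂ) (hu : ‖u‖ = 1)
    (h : ∀ σ : Equiv.Perm (Fin n), ∃ s : ℝ, 0 ≤ s ∧
      ((Equiv.Perm.sign σ : ℤ) : ℂ) * ∏ i, A i (σ i) = (s : ℂ) * u)
    (σ₀ : Equiv.Perm (Fin n)) (hσ₀ : ∏ i, A i (σ₀ i) ≠ 0)
    (t : ℕ) (ht : 1 ≤ t) (htn : t ≤ n)
    (W B : Fin t → Fin n) (hW : Function.Injective W) (hB : Function.Injective B) :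
    (∑ σ ∈ Finset.univ.filter (fun σ : Equiv.Perm (Fin n) => ∀ i, σ (W i) = B i),
        (∏ i, ‖A i (σ i)‖) /
          (∑ τ : Equiv.Perm (Fin n), ∏ i, ‖A i (τ i)‖))
      = (∏ i, ‖A (W i) (B i)‖) *
        ‖Matrix.det (Matrix.of fun i j : Fin t => A⁻¹ (B i) (W j))‖ := by
  classical
  have hs0 : ∀ σ, 0 ≤ (h σ).choose := fun σ => (h σ).choose_spec.1
  have hseq : ∀ σ, ((Equiv.Perm.sign σ : ℤ) : ℂ) * ∏ i, A i (σ i)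
      = (((h σ).choose : ℝ) : ℂ) * u := fun σ => (h σ).choose_spec.2
  set s : Equiv.Perm (Fin n) → ℝ := fun σ => (h σ).choose with hsdef
  have hsgn : ∀ σ : Equiv.Perm (Fin n),
      ‖((Equiv.Perm.sign σ : ℤ) : ℂ)‖ = 1 := by
    intro σ
    rcases Int.units_eq_one_or (Equiv.Perm.sign σ) with h1 | h1 <;> rw [h1] <;> simp
  have habs : ∀ σ, ∏ i, ‖A i (σ i)‖ = s σ := by
    intro σ
    have h2 := congrArg (‖·‖) (hseq σ)
    rw [norm_mul, norm_mul, hu, mul_one, Complex.norm_real, Real.norm_eq_abs, abs_of_nonneg (hs0 σ),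
      hsgn σ, one_mul, norm_prod] at h2
    exact h2
  have hdetA : A.det = ((∑ τ, s τ : ℝ) : ℂ) * u := by
    rw [det_row_form]
    calc ∑ σ : Equiv.Perm (Fin n), ((Equiv.Perm.sign σ : ℤ) : ℂ) * ∏ i, A i (σ i)
        = ∑ σ : Equiv.Perm (Fin n), ((s σ : ℝ) : ℂ) * u :=
          Finset.sum_congr rfl fun σ _ => hseq σ
      _ = ((∑ τ, s τ : ℝ) : ℂ) * u := by rw [← Finset.sum_mul]; norm_cast
  have habsdet : ‖A.det‖ = ∑ τ, s τ := by
    rw [hdetA, norm_mul, hu, mul_one, Complex.norm_real, Real.norm_eq_abs,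
      abs_of_nonneg (Finset.sum_nonneg fun τ _ => hs0 τ)]
  have hs0pos : 0 < s σ₀ := by
    have h2 : ‖∏ i, A i (σ₀ i)‖ = s σ₀ := by
      rw [norm_prod]; exact habs σ₀
    have h3 : s σ₀ ≠ 0 := by
      rw [← h2]; exact norm_ne_zero_iff.mpr hσ₀
    exact lt_of_le_of_ne (hs0 σ₀) (Ne.symm h3)
  have hDpos : 0 < ∑ τ, s τ :=
    lt_of_lt_of_le hs0pos (Finset.single_le_sum (fun τ _ => hs0 τ) (Finset.mem_univ σ₀))
  have hdetne : A.det ≠ 0 := by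
    intro e
    rw [e, norm_zero] at habsdet
    exact absurd habsdet.symm (ne_of_gt hDpos)
  have hAunit : IsUnit A.det := isUnit_iff_ne_zero.mpr hdetne
  have hnum : ∑ σ ∈ Finset.univ.filter (fun σ : Equiv.Perm (Fin n) => ∀ i, σ (W i) = B i),
      ∏ i, ‖A i (σ i)‖
      = (∑ τ, s τ) * ((∏ i, ‖A (W i) (B i)‖) *
          ‖Matrix.det (Matrix.of fun i j : Fin t => A⁻¹ (B i) (W j))‖) := by
    have h3 : ∑ σ ∈ Finset.univ.filter (fun σ : Equiv.Perm (Fin n) => ∀ i, σ (W i) = B i),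
        ((Equiv.Perm.sign σ : ℤ) : ℂ) * ∏ i, A i (σ i)
        = ((∑ σ ∈ Finset.univ.filter (fun σ : Equiv.Perm (Fin n) => ∀ i, σ (W i) = B i),
            s σ : ℝ) : ℂ) * u := by
      calc _ = ∑ σ ∈ Finset.univ.filter
                (fun σ : Equiv.Perm (Fin n) => ∀ i, σ (W i) = B i), ((s σ : ℝ) : ℂ) * u :=
              Finset.sum_congr rfl fun σ _ => hseq σ
        _ = _ := by rw [← Finset.sum_mul]; norm_cast
    have h4 := congrArg (‖·‖) (h3.symm.trans (key_identity A hAunit W B hW))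
    rw [norm_mul, norm_mul, hu, mul_one, Complex.norm_real, Real.norm_eq_abs,
      abs_of_nonneg (Finset.sum_nonneg fun σ _ => hs0 σ), norm_mul, habsdet,
      norm_prod] at h4
    calc ∑ σ ∈ Finset.univ.filter (fun σ : Equiv.Perm (Fin n) => ∀ i, σ (W i) = B i),
          ∏ i, ‖A i (σ i)‖
        = ∑ σ ∈ Finset.univ.filter (fun σ : Equiv.Perm (Fin n) => ∀ i, σ (W i) = B i), s σ :=
          Finset.sum_congr rfl fun σ _ => habs σ
      _ = _ := by rw [h4]; ring
  have hden : (∑ τ : Equiv.Perm (Fin n), ∏ i, ‖A i (τ i)‖) = ∑ τ, s τ :=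
    Finset.sum_congr rfl fun τ _ => habs τ
  rw [← Finset.sum_div, hden, hnum]
  exact mul_div_cancel_left₀ _ (ne_of_gt hDpos)
end
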